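/- arXiv:1704.02537 — 2 statements merged into one kernel-verified Lean document; each statement's English description precedes it below -/
import Mathlib

section
/- Let f : {-1,1}^n → {-1,1} and let p be a polynomial of weight 1 sign-representing f with margin δ. Then the sign matrix M of f ∘ XOR (indexed by subsets T₁, T₂ ⊆ [n] via characteristic vectors, with M(T₁,T₂) = f(w_{T₁} ⊕ w_{T₂})) admits unit vectors u_T, v_T ∈ ℝ^{2^n}, for T ⊆ [n], such that sgn(⟨u_{T₁}, v_{T₂}⟩) = M(T₁,T₂) and |⟨u_{T₁}, v_{T₂}⟩| ≥ δ for all T₁, T₂. Consequently the matrix margin of M_{f∘XOR} is at least m(f). -/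
open scoped BigOperators RealInnerProductSpace

noncomputable section

/-- sign value of a bit: `true` ↦ -1, `false` ↦ 1 (±1 encoding of the cube). -/
def sgnv (b : Bool) : ℝ := if b then -1 else 1

/-- the Fourier character χ_S on the cube. -/
def chi {ι : Type*} (S : Finset ι) (x : ι → Bool) : ℝ := ∏ i ∈ S, sgnv (x i)

/-- evaluation of the multilinear polynomial with coefficients `c`. -/
def pEval {ι : Type*} [Fintype ι] [DecidableEq ι] (c : Finset ι → ℝ) (x : ι → Bool) : ℝ :=
  ∑ S : Finset ι, c S * chi S x

/-- weight of a polynomial: sum of absolute values of its coefficients. -/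
def wt {ι : Type*} [Fintype ι] [DecidableEq ι] (c : Finset ι → ℝ) : ℝ :=
  ∑ S : Finset ι, |c S|

/-- `c` sign represents `f`. -/
def SignRep {ι : Type*} [Fintype ι] [DecidableEq ι] (c : Finset ι → ℝ)
    (f : (ι → Bool) → ℝ) : Prop := ∀ x, 0 < pEval c x * f x

/-- polynomial margin of `f`. -/
def margin {ι : Type*} [Fintype ι] [DecidableEq ι] (f : (ι → Bool) → ℝ) : ℝ :=
  sSup {δ : ℝ | ∃ c : Finset ι → ℝ, wt c ≤ 1 ∧ SignRep c f ∧ ∀ x, δ ≤ pEval c x * f x}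

/-- the margin of a sign matrix `A`: the supremum over realizations by vectors
`u_a, v_b` with `sgn⟨u_a, v_b⟩ = A a b` of `min_{a,b} |⟨u_a,v_b⟩|/(‖u_a‖‖v_b‖)`. -/
def matMargin {α β : Type*} (A : α → β → ℝ) : ℝ :=
  sSup {δ : ℝ | ∃ N : ℕ, ∃ u : α → EuclideanSpace ℝ (Fin N),
    ∃ v : β → EuclideanSpace ℝ (Fin N),
    (∀ a b, 0 < ⟪u a, v b⟫ * A a b) ∧
    ∀ a b, δ ≤ |⟪u a, v b⟫| / (‖u a‖ * ‖v b‖)}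

/-- the communication matrix of `f ∘ XOR`, indexed by subsets `T₁, T₂ ⊆ [n]` via their
characteristic vectors: `M(T₁,T₂) = f(w_{T₁} ⊕ w_{T₂})`. -/
def Mxor {n : ℕ} (f : (Fin n → Bool) → ℝ) : Finset (Fin n) → Finset (Fin n) → ℝ :=
  fun T₁ T₂ => f (fun i => xor (decide (i ∈ T₁)) (decide (i ∈ T₂)))

/-!
Factor `p(x ⊕ y) = Σ_S c_S χ_S(x) χ_S(y)` as a Gram matrix: with
`u_x = (√|c_S| χ_S(x))_S` and `v_y = (sign(c_S) √|c_S| χ_S(y))_S` one gets `⟨u_x, v_y⟩ = p(x ⊕ y)`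
and `‖u_x‖² = ‖v_y‖² = Σ_S |c_S| = wt c`. Hence a sign-representation of `f` of weight at most 1
and margin `δ` realizes the sign matrix of `f ∘ XOR` with normalized inner products at least `δ`.
-/

lemma sgnv_mul_self (b : Bool) : sgnv b * sgnv b = 1 := by
  cases b <;> norm_num [sgnv]

lemma sgnv_xor (a b : Bool) : sgnv (xor a b) = sgnv a * sgnv b := by
  cases a <;> cases b <;> norm_num [sgnv]

lemma chi_mul_self {ι : Type*} (S : Finset ι) (x : ι → Bool) : chi S x * chi S x = 1 := by
  simp only [chi, ← Finset.prod_mul_distrib, sgnv_mul_self, Finset.prod_const_one]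

lemma chi_xor {ι : Type*} (S : Finset ι) (x y : ι → Bool) :
    chi S (fun i => xor (x i) (y i)) = chi S x * chi S y := by
  simp only [chi, ← Finset.prod_mul_distrib, sgnv_xor]

section GramFactorization

variable {ι : Type*} [Fintype ι]

def charVec (a : Finset ι → ℝ) (x : ι → Bool) : EuclideanSpace ℝ (Finset ι) :=
  WithLp.toLp 2 fun S => a S * chi S x

lemma inner_charVec [DecidableEq ι] (a b : Finset ι → ℝ) (x y : ι → Bool) :
    ⟪charVec a x, charVec b y⟫ = pEval (a * b) (fun i => xor (x i) (y i)) := by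
  simp only [PiLp.inner_apply, charVec, pEval, RCLike.inner_apply, conj_trivial, chi_xor,
    Pi.mul_apply]
  exact Finset.sum_congr rfl fun S _ => by ring

lemma norm_charVec (a : Finset ι → ℝ) (x : ι → Bool) :
    ‖charVec a x‖ = √(∑ S, a S ^ 2) := by
  rw [EuclideanSpace.norm_eq]
  congr 1
  refine Finset.sum_congr rfl fun S _ => ?_
  simp only [charVec, Real.norm_eq_abs, sq_abs]
  linear_combination a S ^ 2 * chi_mul_self S x

lemma exists_gram_factorization [DecidableEq ι] (c : Finset ι → ℝ) :
    ∃ u v : (ι → Bool) → EuclideanSpace ℝ (Finset ι),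
      (∀ x y, ⟪u x, v y⟫ = pEval c (fun i => xor (x i) (y i))) ∧
      (∀ x, ‖u x‖ = √(wt c)) ∧ (∀ y, ‖v y‖ = √(wt c)) := by
  set a : Finset ι → ℝ := fun S => √|c S|
  set b : Finset ι → ℝ := fun S => SignType.sign (c S) * √|c S|
  have hab : a * b = c := funext fun S => by
    simp only [a, b, Pi.mul_apply]
    linear_combination (SignType.sign (c S) : ℝ) * Real.mul_self_sqrt (abs_nonneg (c S))
      + sign_mul_abs (c S)
  have ha : ∑ S, a S ^ 2 = wt c :=
    Finset.sum_congr rfl fun S _ => Real.sq_sqrt (abs_nonneg _)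
  have hb : ∑ S, b S ^ 2 = wt c := Finset.sum_congr rfl fun S _ => by
    simp only [b, mul_pow, Real.sq_sqrt (abs_nonneg (c S))]
    linear_combination (SignType.sign (c S) : ℝ) * sign_mul_abs (c S) + sign_mul_self (c S)
  exact ⟨charVec a, charVec b, fun x y => by rw [inner_charVec, hab],
    fun x => by rw [norm_charVec, ha], fun y => by rw [norm_charVec, hb]⟩

end GramFactorization

lemma wt_pos_of_signRep {ι : Type*} [Fintype ι] [DecidableEq ι] {c : Finset ι → ℝ}
    {f : (ι → Bool) → ℝ} (hs : SignRep c f) : 0 < wt c := by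
  refine (Finset.sum_nonneg fun S _ => abs_nonneg (c S)).lt_of_ne fun hw => ?_
  have hc : ∀ S, c S = 0 := fun S => abs_eq_zero.1 <|
    (Finset.sum_eq_zero_iff_of_nonneg fun S _ => abs_nonneg (c S)).1 hw.symm S
      (Finset.mem_univ S)
  simpa [pEval, hc] using hs fun _ => false

lemma le_abs_of_le_mul_sign {δ p s : ℝ} (hs : s = 1 ∨ s = -1) (h : δ ≤ p * s) : δ ≤ |p| := by
  calc δ ≤ |p * s| := h.trans (le_abs_self _)
    _ = |p| := by rcases hs with rfl | rfl <;> simp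

section MatrixMargin

variable {α β : Type*}

def matMarginSet (A : α → β → ℝ) : Set ℝ :=
  {δ : ℝ | ∃ N : ℕ, ∃ u : α → EuclideanSpace ℝ (Fin N),
    ∃ v : β → EuclideanSpace ℝ (Fin N),
    (∀ a b, 0 < ⟪u a, v b⟫ * A a b) ∧
    ∀ a b, δ ≤ |⟪u a, v b⟫| / (‖u a‖ * ‖v b‖)}

lemma bddAbove_matMarginSet [Nonempty α] [Nonempty β] (A : α → β → ℝ) :
    BddAbove (matMarginSet A) := by
  refine ⟨1, fun δ ⟨N, u, v, _, hδ⟩ => ?_⟩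
  obtain ⟨a⟩ := ‹Nonempty α›
  obtain ⟨b⟩ := ‹Nonempty β›
  exact (hδ a b).trans (div_le_one_of_le₀ (abs_real_inner_le_norm _ _) (by positivity))

lemma le_matMargin {κ : Type*} [Fintype κ] [Nonempty α] [Nonempty β] {A : α → β → ℝ} {δ : ℝ}
    (u : α → EuclideanSpace ℝ κ) (v : β → EuclideanSpace ℝ κ)
    (hsign : ∀ a b, 0 < ⟪u a, v b⟫ * A a b)
    (hδ : ∀ a b, δ ≤ |⟪u a, v b⟫| / (‖u a‖ * ‖v b‖)) : δ ≤ matMargin A := by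
  let e := LinearIsometryEquiv.piLpCongrLeft 2 ℝ ℝ (Fintype.equivFin κ)
  refine le_csSup (bddAbove_matMarginSet A) ⟨_, fun a => e (u a), fun b => e (v b), ?_, ?_⟩
  · simpa only [LinearIsometryEquiv.inner_map_map] using hsign
  · simpa only [LinearIsometryEquiv.inner_map_map, LinearIsometryEquiv.norm_map] using hδ

lemma matMargin_nonneg [Fintype α] [DecidableEq α] [Nonempty α] [Nonempty β]
    {A : α → β → ℝ} (hA : ∀ a b, A a b ≠ 0) : 0 ≤ matMargin A := by
  refine le_matMargin (fun a => EuclideanSpace.single a 1) (fun b => WithLp.toLp 2 (A · b))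
    (fun a b => ?_) fun a b => by positivity
  simpa [EuclideanSpace.inner_single_left] using mul_self_pos.2 (hA a b)

end MatrixMargin

section XorMatrix

variable {n : ℕ} {f : (Fin n → Bool) → ℝ}

lemma exists_realization_Mxor (hf : ∀ x, f x = 1 ∨ f x = -1) {c : Finset (Fin n) → ℝ} {δ : ℝ}
    (hs : SignRep c f) (hδ : ∀ x, δ ≤ pEval c x * f x) :
    ∃ u v : Finset (Fin n) → EuclideanSpace ℝ (Finset (Fin n)),
      (∀ T, ‖u T‖ = √(wt c)) ∧ (∀ T, ‖v T‖ = √(wt c)) ∧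
      (∀ T₁ T₂, 0 < ⟪u T₁, v T₂⟫ * Mxor f T₁ T₂) ∧
      (∀ T₁ T₂, δ ≤ |⟪u T₁, v T₂⟫|) := by
  obtain ⟨u, v, hinner, hu, hv⟩ := exists_gram_factorization c
  refine ⟨fun T => u (· ∈ T), fun T => v (· ∈ T), fun T => hu _, fun T => hv _,
    fun T₁ T₂ => ?_, fun T₁ T₂ => ?_⟩
  · rw [hinner]
    exact hs _
  · rw [hinner]
    exact le_abs_of_le_mul_sign (hf _) (hδ _)

lemma le_matMargin_Mxor (hf : ∀ x, f x = 1 ∨ f x = -1) {c : Finset (Fin n) → ℝ} {δ : ℝ}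
    (hw : wt c ≤ 1) (hs : SignRep c f) (hδ : ∀ x, δ ≤ pEval c x * f x) :
    δ ≤ matMargin (Mxor f) := by
  obtain ⟨u, v, hu, hv, hsign, hδuv⟩ := exists_realization_Mxor hf hs hδ
  refine le_matMargin u v hsign fun T₁ T₂ => ?_
  have hw_pos := wt_pos_of_signRep hs
  rw [hu, hv, Real.mul_self_sqrt hw_pos.le]
  exact (hδuv T₁ T₂).trans (le_div_self (abs_nonneg _) hw_pos hw)

end XorMatrix

/-- if a weight-1 polynomial `p` sign represents `f` with margin `δ`, then
there are unit vectors `u_T, v_T ∈ ℝ^{2^n}` realizing the sign matrix of `f ∘ XOR` with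
all inner products of absolute value at least `δ`; consequently the matrix margin of
`M_{f∘XOR}` is at least the polynomial margin `m(f)`. -/
theorem matrix_margin_ge (n : ℕ) (f : (Fin n → Bool) → ℝ)
    (hf : ∀ x, f x = 1 ∨ f x = -1) :
    (∀ (c : Finset (Fin n) → ℝ) (δ : ℝ), wt c = 1 → SignRep c f →
      (∀ x, δ ≤ pEval c x * f x) →
      ∃ u v : Finset (Fin n) → EuclideanSpace ℝ (Finset (Fin n)),
        (∀ T, ‖u T‖ = 1) ∧ (∀ T, ‖v T‖ = 1) ∧
        (∀ T₁ T₂, 0 < ⟪u T₁, v T₂⟫ * Mxor f T₁ T₂) ∧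
        (∀ T₁ T₂, δ ≤ |⟪u T₁, v T₂⟫|)) ∧
    margin f ≤ matMargin (Mxor f) := by
  refine ⟨fun c δ hw hs hδ => ?_, ?_⟩
  · simpa only [hw, Real.sqrt_one] using exists_realization_Mxor hf hs hδ
  · have hMxor : ∀ T₁ T₂, Mxor f T₁ T₂ ≠ 0 := fun T₁ T₂ => by
      rcases hf (fun i => xor (decide (i ∈ T₁)) (decide (i ∈ T₂))) with h | h <;>
        simp [Mxor, h]
    exact Real.sSup_le (fun δ ⟨c, hw, hs, hδ⟩ => le_matMargin_Mxor hf hw hs hδ)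
      (matMargin_nonneg hMxor)

end
end

section
/- Let f : {-1,1}^n → {-1,1} satisfy ε_d(f) > 1 − 2^{−d} for some d ≥ 2 (no degree-d polynomial approximates f pointwise to error 1 − 2^{−d}). Then for any constant 0 < c' < 1 − 1/d, the margin of the Krause–Pudlák lift satisfies m(f^op) ≤ 2^{−c'·d}. -/
open scoped BigOperators

noncomputable section

/-- the Krause–Pudlák selector lift `f^op : {-1,1}^{3n} → {-1,1}`: the bit `z_i`
(third block, `true` ↔ −1) selects `x_i` (first block) or `y_i` (second block). -/
def fop {n : ℕ} (f : (Fin n → Bool) → ℝ) : ((Fin n ⊕ Fin n ⊕ Fin n) → Bool) → ℝ :=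
  fun v => f (fun i =>
    if v (Sum.inr (Sum.inr i)) then v (Sum.inl i) else v (Sum.inr (Sum.inl i)))


open scoped Classical

section KP
variable {n : ℕ}

abbrev KPI (n : ℕ) := Fin n ⊕ Fin n ⊕ Fin n

def Vmap (z u w : Fin n → Bool) : KPI n → Bool
  | Sum.inl i => if z i then u i else w i
  | Sum.inr (Sum.inl i) => if z i then w i else u i
  | Sum.inr (Sum.inr i) => z i

def Tmon (S : Finset (KPI n)) : Finset (Fin n) :=
  Finset.univ.filter (fun i => Sum.inl i ∈ S ∨ Sum.inr (Sum.inl i) ∈ S)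

def Surv (S : Finset (KPI n)) (z : Fin n → Bool) : Prop :=
  ∀ i, (Sum.inl i ∈ S → z i = true) ∧ (Sum.inr (Sum.inl i) ∈ S → z i = false)

def sig (S : Finset (KPI n)) (z : Fin n → Bool) : ℝ :=
  ∏ i, if Sum.inr (Sum.inr i) ∈ S then sgnv (z i) else 1

lemma sum_pi_bool (g : Fin n → Bool → ℝ) :
    ∑ w : Fin n → Bool, ∏ i, g i (w i) = ∏ i, (g i true + g i false) := by
  rw [← Fintype.prod_sum g]
  simp [Fintype.sum_bool]

lemma chi_eq_prod_univ {ι : Type*} [Fintype ι] (S : Finset ι) (x : ι → Bool) :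
    chi S x = ∏ i : ι, (if i ∈ S then sgnv (x i) else 1) := by
  rw [chi, Finset.prod_ite_mem, Finset.univ_inter]

lemma sum_chi_Vmap (S : Finset (KPI n)) (z u : Fin n → Bool) :
    ∑ w : Fin n → Bool, chi S (Vmap z u w)
      = (2 : ℝ) ^ n * sig S z * (if Surv S z then chi (Tmon S) u else 0) := by
  set G : Fin n → Bool → ℝ := fun i b =>
      (if Sum.inl i ∈ S then sgnv (if z i then u i else b) else 1) *
      (if Sum.inr (Sum.inl i) ∈ S then sgnv (if z i then b else u i) else 1) with hG
  have key : ∀ w, chi S (Vmap z u w) = sig S z * ∏ i, G i (w i) := by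
    intro w
    rw [chi_eq_prod_univ, Fintype.prod_sum_type, Fintype.prod_sum_type, hG, sig,
      Finset.prod_mul_distrib]
    simp only [Vmap]
    ring
  have hfac : ∀ i, G i true + G i false =
      if (Sum.inl i ∈ S → z i = true) ∧ (Sum.inr (Sum.inl i) ∈ S → z i = false) then
        2 * (if i ∈ Tmon S then sgnv (u i) else 1) else 0 := by
    intro i
    by_cases hx : Sum.inl i ∈ S <;> by_cases hy : Sum.inr (Sum.inl i) ∈ S <;>
      cases hzi : z i <;> simp [hG, Tmon, hx, hy, hzi, sgnv] <;> cases hui : u i <;> norm_num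
  simp only [key, ← Finset.mul_sum, sum_pi_bool]
  rw [Finset.prod_congr rfl (fun i _ => hfac i)]
  by_cases hs : Surv S z
  · have : ∀ i ∈ Finset.univ, (if (Sum.inl i ∈ S → z i = true) ∧
        (Sum.inr (Sum.inl i) ∈ S → z i = false) then
        2 * (if i ∈ Tmon S then sgnv (u i) else 1) else 0)
        = 2 * (if i ∈ Tmon S then sgnv (u i) else 1) := by
      intro i _; rw [if_pos (hs i)]
    rw [Finset.prod_congr rfl this, if_pos hs, Finset.prod_mul_distrib, Finset.prod_const]
    rw [chi_eq_prod_univ (Tmon S) u]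
    simp [Finset.card_univ]
    ring
  · rw [if_neg hs, mul_zero]
    rw [Surv] at hs
    push_neg at hs
    obtain ⟨i, hi⟩ := hs
    refine mul_eq_zero_of_right _ (Finset.prod_eq_zero (Finset.mem_univ i) ?_)
    rw [if_neg]
    rintro ⟨h1, h2⟩
    exact (hi h1).2 (h2 (hi h1).1)

/-- coefficients after fixing `z` and averaging irrelevant variables. -/
def cq (c : Finset (KPI n) → ℝ) (z : Fin n → Bool) (T : Finset (Fin n)) : ℝ :=
  ∑ S : Finset (KPI n), if Surv S z ∧ Tmon S = T then c S * sig S z else 0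

lemma abs_sgnv (b : Bool) : |sgnv b| = 1 := by cases b <;> simp [sgnv]

lemma abs_chi {ι : Type*} (S : Finset ι) (x : ι → Bool) : |chi S x| = 1 := by
  rw [chi, Finset.abs_prod]
  simp [abs_sgnv]

lemma abs_sig (S : Finset (KPI n)) (z : Fin n → Bool) : |sig S z| ≤ 1 := by
  rw [sig, Finset.abs_prod]
  calc ∏ i, |if Sum.inr (Sum.inr i) ∈ S then sgnv (z i) else 1|
      ≤ ∏ _i : Fin n, (1:ℝ) := by
        refine Finset.prod_le_prod (fun i _ => abs_nonneg _) (fun i _ => ?_)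
        split <;> simp [abs_sgnv]
    _ = 1 := by simp

lemma pEval_cq (c : Finset (KPI n) → ℝ) (z u : Fin n → Bool) :
    pEval (cq c z) u = ((2:ℝ)^n)⁻¹ * ∑ w : Fin n → Bool, pEval c (Vmap z u w) := by
  have h1 : ∀ S : Finset (KPI n),
      ∑ T : Finset (Fin n), (if Surv S z ∧ Tmon S = T then c S * sig S z else 0) * chi T u
      = c S * sig S z * (if Surv S z then chi (Tmon S) u else 0) := by
    intro S
    by_cases hs : Surv S z
    · simp only [hs, true_and, ite_mul, zero_mul, Finset.sum_ite_eq, Finset.mem_univ, if_true]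
    · simp [hs]
  have hL : pEval (cq c z) u
      = ∑ S : Finset (KPI n), c S * sig S z * (if Surv S z then chi (Tmon S) u else 0) := by
    rw [pEval]
    simp only [cq, Finset.sum_mul]
    rw [Finset.sum_comm]
    exact Finset.sum_congr rfl fun S _ => h1 S
  have hswap : ∑ w : Fin n → Bool, pEval c (Vmap z u w)
      = ∑ S : Finset (KPI n),
          c S * ((2:ℝ)^n * sig S z * (if Surv S z then chi (Tmon S) u else 0)) := by
    simp only [pEval]
    rw [Finset.sum_comm]
    exact Finset.sum_congr rfl fun S _ => by rw [← Finset.mul_sum, sum_chi_Vmap]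
  rw [hL, hswap, Finset.mul_sum]
  refine Finset.sum_congr rfl fun S _ => ?_
  have h2 : ((2:ℝ)^n) ≠ 0 := by positivity
  field_simp

lemma fop_Vmap (f : (Fin n → Bool) → ℝ) (z u w : Fin n → Bool) :
    fop f (Vmap z u w) = f u := by
  unfold fop
  congr 1
  funext i
  by_cases hz : z i <;> simp [Vmap, hz]

lemma cq_lb {c : Finset (KPI n) → ℝ} {f : (Fin n → Bool) → ℝ} {δ : ℝ}
    (hlb : ∀ v, δ ≤ pEval c v * fop f v) (z u : Fin n → Bool) :
    δ ≤ pEval (cq c z) u * f u := by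
  have hcard : (Finset.univ : Finset (Fin n → Bool)).card = 2 ^ n := by
    simp [Finset.card_univ]
  have hsum : (2:ℝ)^n * δ ≤ ∑ w : Fin n → Bool, pEval c (Vmap z u w) * f u := by
    calc (2:ℝ)^n * δ = ∑ _w : Fin n → Bool, δ := by
          rw [Finset.sum_const, hcard]; push_cast; ring
      _ ≤ _ := by
          refine Finset.sum_le_sum fun w _ => ?_
          have := hlb (Vmap z u w)
          rwa [fop_Vmap] at this
  have h2 : (0:ℝ) < (2:ℝ)^n := by positivity
  rw [pEval_cq, mul_assoc, Finset.sum_mul, inv_mul_eq_div, le_div_iff₀ h2]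
  linarith [hsum]

/-- total weight of surviving high-degree monomials. -/
def Whigh (c : Finset (KPI n) → ℝ) (d : ℕ) (z : Fin n → Bool) : ℝ :=
  ∑ S : Finset (KPI n), if Surv S z ∧ d < (Tmon S).card then |c S| else 0

lemma Whigh_nonneg (c : Finset (KPI n) → ℝ) (d : ℕ) (z : Fin n → Bool) :
    0 ≤ Whigh c d z :=
  Finset.sum_nonneg fun S _ => by positivity

def gS (S : Finset (KPI n)) (i : Fin n) (b : Bool) : ℝ :=
  if (Sum.inl i ∈ S → b = true) ∧ (Sum.inr (Sum.inl i) ∈ S → b = false) then 1 else 0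

lemma count_surv (S : Finset (KPI n)) :
    ∑ z : Fin n → Bool, (if Surv S z then (1:ℝ) else 0)
      ≤ (2:ℝ)^n * (2:ℝ) ^ (-(((Tmon S).card : ℕ) : ℝ)) := by
  have hind : ∀ z : Fin n → Bool, (if Surv S z then (1:ℝ) else 0) = ∏ i, gS S i (z i) := by
    intro z
    by_cases hs : Surv S z
    · rw [if_pos hs]
      exact (Finset.prod_eq_one fun i _ => by simp only [gS]; rw [if_pos (hs i)]).symm
    · rw [if_neg hs]
      rw [Surv] at hs
      push_neg at hs
      obtain ⟨i, hi⟩ := hs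
      refine (Finset.prod_eq_zero (Finset.mem_univ i) ?_).symm
      simp only [gS]
      rw [if_neg]
      rintro ⟨h1, h2⟩
      exact (hi h1).2 (h2 (hi h1).1)
  have hfacb : ∀ i, gS S i true + gS S i false ≤ (if i ∈ Tmon S then (1:ℝ) else 2) := by
    intro i
    by_cases hx : Sum.inl i ∈ S <;> by_cases hy : Sum.inr (Sum.inl i) ∈ S <;>
      simp [gS, Tmon, hx, hy] <;> norm_num
  have hk : (Tmon S).card ≤ n := by
    simpa using Finset.card_le_card (Finset.subset_univ (Tmon S))
  have hfilter : Finset.univ.filter (fun i => i ∈ Tmon S) = Tmon S := by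
    ext i; simp
  have hcard2 : (Finset.univ.filter (fun i => i ∉ Tmon S)).card = n - (Tmon S).card := by
    rw [Finset.filter_not, hfilter, Finset.card_sdiff_of_subset (Finset.subset_univ _)]
    simp
  calc ∑ z : Fin n → Bool, (if Surv S z then (1:ℝ) else 0)
      = ∏ i, (gS S i true + gS S i false) := by
        rw [Finset.sum_congr rfl (fun z _ => hind z)]
        exact sum_pi_bool (gS S)
    _ ≤ ∏ i, (if i ∈ Tmon S then (1:ℝ) else 2) := by
        refine Finset.prod_le_prod (fun i _ => ?_) (fun i _ => hfacb i)
        have h1 : (0:ℝ) ≤ gS S i true := by simp only [gS]; positivity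
        have h2 : (0:ℝ) ≤ gS S i false := by simp only [gS]; positivity
        linarith
    _ = 2 ^ (n - (Tmon S).card) := by
        rw [← Finset.prod_filter_mul_prod_filter_not Finset.univ (fun i => i ∈ Tmon S)]
        rw [Finset.prod_congr rfl (fun i hi => if_pos (Finset.mem_filter.mp hi).2),
          Finset.prod_congr rfl (fun i hi => if_neg (Finset.mem_filter.mp hi).2)]
        simp [hcard2]
    _ ≤ (2:ℝ)^n * (2:ℝ) ^ (-(((Tmon S).card : ℕ) : ℝ)) := by
        have hpow : (2:ℝ) ^ (-(((Tmon S).card : ℕ) : ℝ)) = ((2:ℝ)^(Tmon S).card)⁻¹ := by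
          rw [Real.rpow_neg (by norm_num), Real.rpow_natCast]
        rw [hpow, ← div_eq_mul_inv, le_div_iff₀ (by positivity), ← pow_add,
          Nat.sub_add_cancel hk]


lemma exists_good_z (c : Finset (KPI n) → ℝ) (d : ℕ) (hwt : wt c ≤ 1) :
    ∃ z : Fin n → Bool, Whigh c d z ≤ (2:ℝ) ^ (-((d:ℝ)+1)) := by
  set B : ℝ := (2:ℝ) ^ (-((d:ℝ)+1)) with hB
  have hBpos : (0:ℝ) < B := by positivity
  have hsum : ∑ z : Fin n → Bool, Whigh c d z ≤ (2:ℝ)^n * B := by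
    calc ∑ z : Fin n → Bool, Whigh c d z
        = ∑ S : Finset (KPI n), ∑ z : Fin n → Bool,
            (if Surv S z ∧ d < (Tmon S).card then |c S| else 0) := by
          rw [← Finset.sum_comm]; rfl
      _ ≤ ∑ S : Finset (KPI n), |c S| * ((2:ℝ)^n * B) := by
          refine Finset.sum_le_sum fun S _ => ?_
          by_cases hP : d < (Tmon S).card
          · have heq : ∑ z : Fin n → Bool, (if Surv S z ∧ d < (Tmon S).card then |c S| else 0)
                = |c S| * ∑ z : Fin n → Bool, (if Surv S z then (1:ℝ) else 0) := by
              rw [Finset.mul_sum]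
              refine Finset.sum_congr rfl fun z _ => ?_
              by_cases hs : Surv S z <;> simp [hs, hP]
            rw [heq]
            have h1 := count_surv S
            have h2 : (2:ℝ) ^ (-(((Tmon S).card : ℕ):ℝ)) ≤ B := by
              rw [hB]
              apply Real.rpow_le_rpow_of_exponent_le one_le_two
              have : (d:ℝ) + 1 ≤ ((Tmon S).card : ℝ) := by exact_mod_cast hP
              linarith
            calc |c S| * ∑ z : Fin n → Bool, (if Surv S z then (1:ℝ) else 0)
                ≤ |c S| * ((2:ℝ)^n * (2:ℝ) ^ (-(((Tmon S).card : ℕ):ℝ))) :=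
                  mul_le_mul_of_nonneg_left h1 (abs_nonneg _)
              _ ≤ |c S| * ((2:ℝ)^n * B) := by
                  refine mul_le_mul_of_nonneg_left ?_ (abs_nonneg _)
                  exact mul_le_mul_of_nonneg_left h2 (by positivity)
          · have heq : ∑ z : Fin n → Bool, (if Surv S z ∧ d < (Tmon S).card then |c S| else 0)
                = 0 := Finset.sum_eq_zero fun z _ => by simp [hP]
            rw [heq]; positivity
      _ = (∑ S : Finset (KPI n), |c S|) * ((2:ℝ)^n * B) := by rw [Finset.sum_mul]
      _ ≤ 1 * ((2:ℝ)^n * B) := by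
          refine mul_le_mul_of_nonneg_right hwt (by positivity)
      _ = (2:ℝ)^n * B := by ring
  by_contra h
  push_neg at h
  have hcard : (Finset.univ : Finset (Fin n → Bool)).card = 2 ^ n := by
    simp [Finset.card_univ]
  have hlt : (2:ℝ)^n * B < ∑ z : Fin n → Bool, Whigh c d z := by
    calc (2:ℝ)^n * B = ∑ _z : Fin n → Bool, B := by
          rw [Finset.sum_const, hcard, nsmul_eq_mul]; push_cast; ring
      _ < _ := Finset.sum_lt_sum_of_nonempty Finset.univ_nonempty fun z _ => h z
  linarith

lemma sum_T_collapse (S : Finset (KPI n)) (z : Fin n → Bool) (a : ℝ) :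
    ∑ T : Finset (Fin n), (if Surv S z ∧ Tmon S = T then a else 0)
      = if Surv S z then a else 0 := by
  by_cases hs : Surv S z <;> simp [hs]

lemma abs_cq_le (c : Finset (KPI n) → ℝ) (z : Fin n → Bool) (T : Finset (Fin n)) :
    |cq c z T| ≤ ∑ S : Finset (KPI n), (if Surv S z ∧ Tmon S = T then |c S| else 0) := by
  refine (Finset.abs_sum_le_sum_abs _ _).trans (Finset.sum_le_sum fun S _ => ?_)
  split_ifs with h
  · rw [abs_mul]
    nlinarith [abs_sig S z, abs_nonneg (c S)]
  · simp




end KP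

/-- if no degree-`d` polynomial approximates `f` pointwise within
`1 − 2^{−d}` (i.e. `ε_d(f) > 1 − 2^{−d}`), `d ≥ 2`, then for every constant
`0 < c' < 1 − 1/d` the margin of the lift satisfies `m(f^op) ≤ 2^{−c'd}`. -/
theorem lift_margin_bound (n d : ℕ) (hd : 2 ≤ d) (f : (Fin n → Bool) → ℝ)
    (hf : ∀ x, f x = 1 ∨ f x = -1)
    (heps : ∀ c : Finset (Fin n) → ℝ, (∀ S, c S ≠ 0 → S.card ≤ d) →
      ∃ x, 1 - (2 : ℝ) ^ (-(d : ℝ)) < |pEval c x - f x|)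
    (c' : ℝ) (hc0 : 0 < c') (hc1 : c' < 1 - 1 / (d : ℝ)) :
    margin (fop f) ≤ (2 : ℝ) ^ (-(c' * d)) := by
  set X : ℝ := (2:ℝ) ^ (-(d:ℝ)) with hX
  have hXpos : (0:ℝ) < X := by positivity
  have hX1 : X ≤ 1 := by
    rw [hX]
    exact Real.rpow_le_one_of_one_le_of_nonpos one_le_two (neg_nonpos.mpr (Nat.cast_nonneg d))
  refine Real.sSup_le ?_ (le_of_lt (Real.rpow_pos_of_pos two_pos _))
  rintro δ ⟨c, hwt, hsign, hlb⟩
  by_contra hgt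
  push_neg at hgt
  have hd0 : (0:ℝ) < (d:ℝ) := by
    have : 0 < d := by omega
    exact_mod_cast this
  have hcd : c' * d < (d:ℝ) - 1 := by
    have h1 : c' * d < (1 - 1/(d:ℝ)) * d := mul_lt_mul_of_pos_right hc1 hd0
    have hne : (d:ℝ) ≠ 0 := ne_of_gt hd0
    calc c' * d < (1 - 1/(d:ℝ)) * d := h1
      _ = (d:ℝ) - 1 := by field_simp
  have hdelta : 2 * X < δ := by
    have h1 : (2:ℝ)^(-((d:ℝ)-1)) ≤ (2:ℝ)^(-(c'*d)) :=
      Real.rpow_le_rpow_of_exponent_le one_le_two (by linarith)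
    have h2 : (2:ℝ)^(-((d:ℝ)-1)) = 2 * X := by
      rw [hX, show -((d:ℝ)-1) = 1 + -(d:ℝ) by ring, Real.rpow_add (by norm_num), Real.rpow_one]
    linarith
  obtain ⟨z, hz⟩ := exists_good_z c d hwt
  have hzX : Whigh c d z ≤ X / 2 := by
    have h21 : (2:ℝ) ^ (-1 : ℝ) = 1/2 := by
      rw [show (-1:ℝ) = -(1:ℝ) by norm_num, Real.rpow_neg (by norm_num), Real.rpow_one]
      norm_num
    have hBd : (2:ℝ)^(-((d:ℝ)+1)) = X / 2 := by
      rw [hX, show -((d:ℝ)+1) = -(d:ℝ) + -1 by ring, Real.rpow_add (by norm_num), h21]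
      ring
    linarith [hz, hBd ▸ hz]
  set clow : Finset (Fin n) → ℝ := fun T => if T.card ≤ d then cq c z T else 0 with hclow
  set chigh : Finset (Fin n) → ℝ := fun T => if T.card ≤ d then 0 else cq c z T with hchigh
  have hdeg : ∀ T, clow T ≠ 0 → T.card ≤ d := by
    intro T hT
    by_contra hcard
    exact hT (by simp [hclow, hcard])
  obtain ⟨x, hx⟩ := heps clow hdeg
  have hsplit : pEval (cq c z) x = pEval clow x + pEval chigh x := by
    rw [pEval, pEval, pEval, ← Finset.sum_add_distrib]
    refine Finset.sum_congr rfl fun T _ => ?_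
    simp only [hclow, hchigh]
    split_ifs <;> ring
  have hhigh : |pEval chigh x| ≤ Whigh c d z := by
    calc |pEval chigh x| ≤ ∑ T : Finset (Fin n), |chigh T| := by
          rw [pEval]
          refine (Finset.abs_sum_le_sum_abs _ _).trans (Finset.sum_le_sum fun T _ => ?_)
          rw [abs_mul, abs_chi, mul_one]
      _ ≤ ∑ T : Finset (Fin n), (if d < T.card then
            ∑ S : Finset (KPI n), (if Surv S z ∧ Tmon S = T then |c S| else 0) else 0) := by
          refine Finset.sum_le_sum fun T _ => ?_
          simp only [hchigh]
          by_cases hTd : T.card ≤ d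
          · simp [hTd, Nat.not_lt.mpr hTd]
          · rw [if_neg hTd, if_pos (Nat.not_le.mp hTd)]
            exact abs_cq_le c z T
      _ = Whigh c d z := by
          have hsw : ∀ T : Finset (Fin n), (if d < T.card then
              ∑ S : Finset (KPI n), (if Surv S z ∧ Tmon S = T then |c S| else 0) else 0)
              = ∑ S : Finset (KPI n), (if Tmon S = T then
                  (if Surv S z ∧ d < (Tmon S).card then |c S| else 0) else 0) := by
            intro T
            by_cases hT : d < T.card
            · rw [if_pos hT]
              refine Finset.sum_congr rfl fun S _ => ?_
              by_cases h1 : Tmon S = T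
              · subst h1; simp [hT]
              · simp [h1]
            · rw [if_neg hT]
              symm
              refine Finset.sum_eq_zero fun S _ => ?_
              by_cases h1 : Tmon S = T
              · subst h1; simp [hT]
              · simp [h1]
          rw [Finset.sum_congr rfl fun T _ => hsw T, Finset.sum_comm, Whigh]
          refine Finset.sum_congr rfl fun S _ => ?_
          rw [Finset.sum_ite_eq]
          simp
  have hlow1 : |pEval clow x| ≤ 1 := by
    calc |pEval clow x| ≤ ∑ T : Finset (Fin n), |clow T| := by
          rw [pEval]
          refine (Finset.abs_sum_le_sum_abs _ _).trans (Finset.sum_le_sum fun T _ => ?_)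
          rw [abs_mul, abs_chi, mul_one]
      _ ≤ ∑ T : Finset (Fin n), |cq c z T| := by
          refine Finset.sum_le_sum fun T _ => ?_
          simp only [hclow]
          split_ifs
          · exact le_refl _
          · simp [abs_nonneg]
      _ ≤ ∑ T : Finset (Fin n), ∑ S : Finset (KPI n),
            (if Surv S z ∧ Tmon S = T then |c S| else 0) :=
          Finset.sum_le_sum fun T _ => abs_cq_le c z T
      _ = ∑ S : Finset (KPI n), (if Surv S z then |c S| else 0) := by
          rw [Finset.sum_comm]
          exact Finset.sum_congr rfl fun S _ => sum_T_collapse S z _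
      _ ≤ wt c := by
          rw [wt]
          refine Finset.sum_le_sum fun S _ => ?_
          split_ifs <;> simp [abs_nonneg]
      _ ≤ 1 := hwt
  have hAe : X ≤ pEval clow x * f x := by
    have h1 := cq_lb hlb z x
    have habs_f : |f x| = 1 := by rcases hf x with h|h <;> simp [h]
    have h2 : pEval chigh x * f x ≤ Whigh c d z := by
      refine (le_abs_self _).trans ?_
      rw [abs_mul, habs_f, mul_one]
      exact hhigh
    have h3 : pEval clow x * f x = pEval (cq c z) x * f x - pEval chigh x * f x := by
      rw [hsplit]; ring
    rw [h3]
    linarith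
  have hcontr : |pEval clow x - f x| ≤ 1 - X := by
    obtain ⟨hA1, hA2⟩ := abs_le.mp hlow1
    rcases hf x with h|h <;> rw [h] <;> rw [h] at hAe <;> rw [abs_le] <;> constructor <;>
      nlinarith
  linarith

end
end
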